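/- For a real number λ > 0 and integers 1 ≤ k ≤ l, one has ∑_{i=1}^{k} ( i! · C(l,i) ) / ( (λ)_{2i-1} · (λ+2i)_{l-i} ) = l/(λ)_l − (l−k)_{k+1}/(λ)_{l+k}, where (x)_p is the Pochhammer symbol. -/

import Mathlib

/-!
Write `R k = (l - k)_{k+1} / (λ)_{l+k}`. Since `i! · C(l, i) = (l - i + 1)_i`, the `i`-th
summand is `R (i - 1) - R i`: the two factorisations
`(λ)_{2i-1} (λ + 2i - 1) (λ + 2i)_{l-i} = (λ)_{l+i} = (λ)_{l+i-1} (λ + l + i - 1)`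
bring both sides to a common denominator. The sum telescopes to `R 0 - R k`, and `R 0 = l / (λ)_l`.
-/

open Finset

/-- Pochhammer (rising factorial) symbol `(x)_p = x (x+1) ⋯ (x+p-1)`. -/
noncomputable def poch (x : ℝ) (p : ℕ) : ℝ := ∏ i ∈ Finset.range p, (x + i)

open Polynomial Nat

lemma poch_eq_eval_ascPochhammer (x : ℝ) (p : ℕ) : poch x p = (ascPochhammer ℝ p).eval x := by
  induction p with
  | zero => simp [poch]
  | succ p ih => rw [poch, prod_range_succ, ← poch, ih, ascPochhammer_succ_eval]

lemma poch_succ (x : ℝ) (p : ℕ) : poch x (p + 1) = poch x p * (x + p) := by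
  simp only [poch_eq_eval_ascPochhammer, ascPochhammer_succ_eval]

lemma poch_succ_left (x : ℝ) (p : ℕ) : poch x (p + 1) = x * poch (x + 1) p := by
  simp [poch_eq_eval_ascPochhammer, ascPochhammer_succ_left]

lemma poch_add (x : ℝ) (p q : ℕ) : poch x (p + q) = poch x p * poch (x + p) q := by
  simp [poch_eq_eval_ascPochhammer, ← ascPochhammer_mul]

lemma poch_pos {x : ℝ} (hx : 0 < x) (p : ℕ) : 0 < poch x p := by
  rw [poch_eq_eval_ascPochhammer]
  exact ascPochhammer_pos p x hx

lemma factorial_mul_choose_eq_poch {l j : ℕ} (hj : j < l) :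
    ((j + 1)! * l.choose (j + 1) : ℝ) = poch (l - j) (j + 1) := by
  rw [← Nat.cast_mul, ← descFactorial_eq_factorial_mul_choose, cast_descFactorial,
    poch_eq_eval_ascPochhammer, Nat.add_sub_cancel, Nat.cast_sub hj.le]

noncomputable def summand (lam : ℝ) (l i : ℕ) : ℝ :=
  ((Nat.factorial i : ℝ) * (l.choose i : ℝ)) /
    (poch lam (2 * i - 1) * poch (lam + 2 * i) (l - i))

noncomputable def remainder (lam : ℝ) (l k : ℕ) : ℝ :=
  poch ((l : ℝ) - k) (k + 1) / poch lam (l + k)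

lemma remainder_zero (lam : ℝ) (l : ℕ) : remainder lam l 0 = l / poch lam l := by
  simp [remainder, poch]

lemma summand_succ_eq_remainder_sub {lam : ℝ} (hlam : 0 < lam) {l j : ℕ} (hj : j < l) :
    summand lam l (j + 1) = remainder lam l j - remainder lam l (j + 1) := by
  have hsplit :
      poch lam (2 * j + 1) * (lam + (2 * j + 1)) * poch (lam + 2 * (j + 1)) (l - (j + 1)) =
        poch lam (l + j) * (lam + (l + j)) := by
    have h := poch_add lam (2 * j + 2) (l - (j + 1))
    rw [show 2 * j + 2 + (l - (j + 1)) = l + j + 1 by omega, poch_succ, poch_succ] at h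
    push_cast at h
    rw [h]
    ring_nf
  have hnum :
      poch ((l : ℝ) - (j + 1)) (j + 1 + 1) = (l - (j + 1)) * poch ((l : ℝ) - j) (j + 1) := by
    rw [poch_succ_left, show (l : ℝ) - (j + 1) + 1 = l - j by ring]
  have hpos_lj := poch_pos hlam (l + j)
  have hpos_2j := poch_pos hlam (2 * j + 1)
  have hpos_tail := poch_pos (show 0 < lam + 2 * (j + 1) by positivity) (l - (j + 1))
  unfold summand remainder
  rw [factorial_mul_choose_eq_poch hj, Nat.cast_add_one, hnum,
    show 2 * (j + 1) - 1 = 2 * j + 1 by omega, show l + (j + 1) = l + j + 1 by omega,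
    poch_succ lam (l + j)]
  push_cast
  rw [div_sub_div _ _ hpos_lj.ne' (by positivity), div_eq_div_iff (by positivity) (by positivity)]
  linear_combination (-poch ((l : ℝ) - j) (j + 1) * poch lam (l + j)) * hsplit

lemma sum_summand_eq_remainder_sub {lam : ℝ} (hlam : 0 < lam) {k l : ℕ} (hkl : k ≤ l) :
    ∑ i ∈ Icc 1 k, summand lam l i = remainder lam l 0 - remainder lam l k := by
  induction k with
  | zero => simp
  | succ j ih =>
    rw [sum_Icc_succ_top (by omega), ih (by omega), summand_succ_eq_remainder_sub hlam hkl]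
    ring

theorem stmt2_general (lam : ℝ) (hlam : 0 < lam) (k l : ℕ) (hkl : k ≤ l) :
    ∑ i ∈ Finset.Icc 1 k,
        ((Nat.factorial i : ℝ) * (l.choose i : ℝ)) /
          (poch lam (2 * i - 1) * poch (lam + 2 * i) (l - i)) =
      (l : ℝ) / poch lam l - poch ((l : ℝ) - (k : ℝ)) (k + 1) / poch lam (l + k) := by
  rw [← remainder_zero]
  exact sum_summand_eq_remainder_sub hlam hkl

theorem stmt2 (lam : ℝ) (hlam : 0 < lam) (k l : ℕ) (hk : 1 ≤ k) (hkl : k ≤ l) :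
    ∑ i ∈ Finset.Icc 1 k,
        ((Nat.factorial i : ℝ) * (l.choose i : ℝ)) /
          (poch lam (2 * i - 1) * poch (lam + 2 * i) (l - i)) =
      (l : ℝ) / poch lam l - poch ((l : ℝ) - (k : ℝ)) (k + 1) / poch lam (l + k) :=
  stmt2_general lam hlam k l hkl
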